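/- For any Borel set A ⊆ [2, ∞) and any L > 1, limsup_{x→∞} (1/x)∫₁^x 𝟙_A(u) du ≤ ∫_{log L}^∞ 𝟙_A(e^y) dy. -/

import Mathlib

open MeasureTheory Filter Set

lemma my_lintegral_image_eq {s : Set ℝ} {f : ℝ → ℝ} {f' : ℝ → ℝ}
    (hs : MeasurableSet s) (hf' : ∀ x ∈ s, HasDerivWithinAt f (f' x) s x)
    (hf : Set.InjOn f s) (g : ℝ → ENNReal) :
    ∫⁻ x in f '' s, g x = ∫⁻ x in s, ENNReal.ofReal |f' x| * g (f x) := by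
  simpa only [ContinuousLinearMap.det_toSpanSingleton] using
    lintegral_image_eq_lintegral_abs_det_fderiv_mul volume hs
      (fun x hx => (hf' x hx).hasFDerivWithinAt) hf g

lemma exp_image_Ioc (a b : ℝ) : Real.exp '' Set.Ioc a b = Set.Ioc (Real.exp a) (Real.exp b) := by
  ext v
  constructor
  · rintro ⟨y, ⟨hy1, hy2⟩, rfl⟩
    exact ⟨Real.exp_lt_exp.2 hy1, Real.exp_le_exp.2 hy2⟩
  · rintro ⟨h1, h2⟩
    have hv : 0 < v := lt_trans (Real.exp_pos a) h1
    exact ⟨Real.log v, ⟨(Real.lt_log_iff_exp_lt hv).2 h1,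
      (Real.log_le_iff_le_exp hv).2 h2⟩, Real.exp_log hv⟩

theorem limsup_avg_le_log_integral
    (A : Set ℝ) (hA : MeasurableSet A) (hA' : A ⊆ Set.Ici (2 : ℝ))
    (L : ℝ) (hL : 1 < L) :
    Filter.limsup
        (fun x : ℝ => (∫⁻ u in Set.Icc (1 : ℝ) x,
          A.indicator (fun _ => (1 : ENNReal)) u) / ENNReal.ofReal x) atTop
      ≤ ∫⁻ y in Set.Ioi (Real.log L), A.indicator (fun _ => (1 : ENNReal)) (Real.exp y) := by
  set g : ℝ → ENNReal := A.indicator (fun _ => (1 : ENNReal)) with hg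
  have hgmeas : Measurable g := measurable_const.indicator hA
  set I : ENNReal := ∫⁻ y in Set.Ioi (Real.log L), g (Real.exp y) with hI
  have hL0 : (0:ℝ) < L := lt_trans one_pos hL
  set c : ENNReal := ENNReal.ofReal (L - 1) with hc
  -- key pointwise bound
  have key : ∀ x : ℝ, L ≤ x →
      (∫⁻ u in Set.Icc (1 : ℝ) x, g u) ≤ c + ENNReal.ofReal x * I := by
    intro x hx
    have hx0 : (0:ℝ) < x := lt_of_lt_of_le hL0 hx
    have hsub : Set.Icc (1:ℝ) x ⊆ Set.Icc (1:ℝ) L ∪ Set.Ioc L x := by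
      intro u hu
      rcases le_or_gt u L with h | h
      · exact Or.inl ⟨hu.1, h⟩
      · exact Or.inr ⟨h, hu.2⟩
    calc ∫⁻ u in Set.Icc (1:ℝ) x, g u
        ≤ ∫⁻ u in Set.Icc (1:ℝ) L ∪ Set.Ioc L x, g u := lintegral_mono_set hsub
      _ ≤ (∫⁻ u in Set.Icc (1:ℝ) L, g u) + ∫⁻ u in Set.Ioc L x, g u := lintegral_union_le _ _ _
      _ ≤ c + ENNReal.ofReal x * I := by
          gcongr
          · -- first chunk bounded by measure of Icc 1 L
            calc ∫⁻ u in Set.Icc (1:ℝ) L, g u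
                ≤ ∫⁻ _ in Set.Icc (1:ℝ) L, (1:ENNReal) := by
                  apply lintegral_mono
                  intro u
                  exact Set.indicator_le_self A _ u
              _ = c := by
                  simp [Real.volume_Icc, hc]
          · -- second chunk via change of variables u = exp y
            have himg : Set.Ioc L x = Real.exp '' Set.Ioc (Real.log L) (Real.log x) := by
              rw [exp_image_Ioc, Real.exp_log hL0, Real.exp_log hx0]
            rw [himg, my_lintegral_image_eq measurableSet_Ioc
                (fun y _ => (Real.hasDerivAt_exp y).hasDerivWithinAt)
                Real.exp_injective.injOn g]
            calc ∫⁻ y in Set.Ioc (Real.log L) (Real.log x),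
                  ENNReal.ofReal |Real.exp y| * g (Real.exp y)
                ≤ ∫⁻ y in Set.Ioc (Real.log L) (Real.log x),
                    ENNReal.ofReal x * g (Real.exp y) := by
                  apply setLIntegral_mono (measurable_const.mul (hgmeas.comp Real.measurable_exp))
                  intro y hy
                  show ENNReal.ofReal |Real.exp y| * g (Real.exp y) ≤ ENNReal.ofReal x * g (Real.exp y)
                  gcongr ?_ * ?_
                  swap
                  · exact le_rfl
                  rw [abs_of_pos (Real.exp_pos y)]
                  apply ENNReal.ofReal_le_ofReal
                  calc Real.exp y ≤ Real.exp (Real.log x) := Real.exp_le_exp.2 hy.2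
                    _ = x := Real.exp_log hx0
              _ = ENNReal.ofReal x * ∫⁻ y in Set.Ioc (Real.log L) (Real.log x), g (Real.exp y) :=
                  lintegral_const_mul _ (hgmeas.comp Real.measurable_exp)
              _ ≤ ENNReal.ofReal x * I := by
                  gcongr
                  exact lintegral_mono_set Set.Ioc_subset_Ioi_self
  -- eventual bound on the averaged function
  have hev : ∀ᶠ x in atTop, (∫⁻ u in Set.Icc (1 : ℝ) x, g u) / ENNReal.ofReal x
      ≤ c / ENNReal.ofReal x + I := by
    filter_upwards [eventually_ge_atTop L] with x hx
    have hx0 : (0:ℝ) < x := lt_of_lt_of_le hL0 hx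
    have hne : ENNReal.ofReal x ≠ 0 := by simp [ENNReal.ofReal_eq_zero]; linarith
    have hnt : ENNReal.ofReal x ≠ ⊤ := ENNReal.ofReal_ne_top
    calc (∫⁻ u in Set.Icc (1 : ℝ) x, g u) / ENNReal.ofReal x
        ≤ (c + ENNReal.ofReal x * I) / ENNReal.ofReal x := by
          gcongr
          exact key x hx
      _ = c / ENNReal.ofReal x + (ENNReal.ofReal x * I) / ENNReal.ofReal x :=
          ENNReal.add_div
      _ = c / ENNReal.ofReal x + I := by
          rw [mul_comm, mul_div_assoc, ENNReal.div_self hne hnt, mul_one]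
  -- the bounding function tends to I
  have htend : Tendsto (fun x : ℝ => c / ENNReal.ofReal x + I) atTop (nhds I) := by
    have h1 : Tendsto (fun x : ℝ => (ENNReal.ofReal x)⁻¹) atTop (nhds 0) := by
      simpa using ENNReal.tendsto_inv_iff.2 ENNReal.tendsto_ofReal_atTop
    have h2 : Tendsto (fun x : ℝ => c / ENNReal.ofReal x) atTop (nhds 0) := by
      simp only [div_eq_mul_inv]
      simpa using ENNReal.Tendsto.const_mul h1 (Or.inr ENNReal.ofReal_ne_top)
    simpa using h2.add tendsto_const_nhds
  calc Filter.limsup (fun x : ℝ => (∫⁻ u in Set.Icc (1 : ℝ) x, g u) / ENNReal.ofReal x) atTop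
      ≤ Filter.limsup (fun x : ℝ => c / ENNReal.ofReal x + I) atTop :=
        limsup_le_limsup hev
    _ = I := htend.limsup_eq
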